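/- Let x : [t₀, T) → H be a C² solution of (DS). Then the energy function W(t) = g(x(t)) + (1/2)‖ẋ(t)‖² + (ε(t)/2)‖x(t)‖² satisfies Ẇ(t) ≤ 0 for all t ∈ [t₀, T), so W is nonincreasing on [t₀, T); consequently, since g is bounded from below by its minimum value, the velocity ẋ is bounded on [t₀, T). -/

import Mathlib

open Real Filter Topology MeasureTheory Asymptotics
open scoped RealInnerProductSpace

lemma subgrad_ineq {H : Type*} [NormedAddCommGroup H] [InnerProductSpace ℝ H] [CompleteSpace H]
    {g : H → ℝ} (hg_conv : ConvexOn ℝ Set.univ g) (hg_diff : Differentiable ℝ g)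
    (a b : H) : ⟪gradient g a, b - a⟫ ≤ g b - g a := by
  set φ : ℝ → ℝ := fun s => g (s • (b - a) + a) with hφ
  have hconv : ConvexOn ℝ Set.univ φ := by
    have := hg_conv.comp_affineMap (AffineMap.lineMap a b)
    simpa [φ, Function.comp_def, AffineMap.lineMap_apply_module'] using this
  have hline : HasDerivAt (fun s : ℝ => s • (b - a) + a) (b - a) 0 := by
    simpa using ((hasDerivAt_id (0:ℝ)).smul_const (b - a)).add_const a
  have hfd : HasFDerivAt g (InnerProductSpace.toDual ℝ H (gradient g a)) ((0:ℝ) • (b - a) + a) := by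
    simpa using ((hg_diff a).hasGradientAt.hasFDerivAt)
  have hderiv : HasDerivAt φ ⟪gradient g a, b - a⟫ 0 := by
    have := hfd.comp_hasDerivAt 0 hline
    simpa [φ, Function.comp_def, InnerProductSpace.toDual_apply_apply] using this
  have := hconv.le_slope_of_hasDerivAt (Set.mem_univ 0) (Set.mem_univ 1) one_pos hderiv
  simpa [φ, slope_def_field] using this

lemma grad_mono {H : Type*} [NormedAddCommGroup H] [InnerProductSpace ℝ H] [CompleteSpace H]
    {g : H → ℝ} (hg_conv : ConvexOn ℝ Set.univ g) (hg_diff : Differentiable ℝ g)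
    (a b : H) : 0 ≤ ⟪gradient g b - gradient g a, b - a⟫ := by
  have h1 := subgrad_ineq hg_conv hg_diff a b
  have h2 := subgrad_ineq hg_conv hg_diff b a
  have h3 : ⟪gradient g b, a - b⟫ = -⟪gradient g b, b - a⟫ := by
    rw [← inner_neg_right]; congr 1; abel
  rw [inner_sub_left]
  linarith [h3 ▸ h2]

/-- Along any C² solution of (DS) on [t₀, T), the energy
`W(t) = g(x(t)) + ‖ẋ(t)‖²/2 + (ε(t)/2)‖x(t)‖²` has nonpositive derivative, is
nonincreasing, and consequently the velocity is bounded. -/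
theorem statement1
    {H : Type*} [NormedAddCommGroup H] [InnerProductSpace ℝ H] [CompleteSpace H]
    (g : H → ℝ) (t₀ T α q γ β : ℝ) (ε : ℝ → ℝ)
    (hg_conv : ConvexOn ℝ Set.univ g)
    (hg_diff : Differentiable ℝ g)
    (hg_lip : ∀ s : Set H, Bornology.IsBounded s → ∃ L : NNReal, LipschitzOnWith L (gradient g) s)
    (hg_min : ∃ z : H, ∀ y : H, g z ≤ g y)
    (ht₀ : 0 < t₀) (hα : 0 < α) (hq : q ∈ Set.Ioo (0:ℝ) 1)
    (hγβ : 0 < γ ∨ (γ = 0 ∧ 0 < β))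
    (hβneg : β < 0 → |β / γ| ^ (1 / q) < t₀)
    (hε_nonneg : ∀ t, t₀ ≤ t → 0 ≤ ε t)
    (hε_anti : AntitoneOn ε (Set.Ici t₀))
    (hε_C1 : ContDiffOn ℝ 1 ε (Set.Ici t₀))
    (hε_lim : Tendsto ε atTop (nhds 0))
    (x x' x'' : ℝ → H)
    (hx1 : ∀ t ∈ Set.Ico t₀ T, HasDerivAt x (x' t) t)
    (hx2 : ∀ t ∈ Set.Ico t₀ T, HasDerivAt x' (x'' t) t)
    (hx3 : ContinuousOn x'' (Set.Ico t₀ T))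
    (hDS : ∀ t ∈ Set.Ico t₀ T,
      x'' t + (α / t ^ q) • x' t + gradient g (x t + (γ + β / t ^ q) • x' t) + ε t • x t = 0) :
    (∀ t ∈ Set.Ico t₀ T,
      derivWithin (fun s => g (x s) + ‖x' s‖ ^ 2 / 2 + ε s / 2 * ‖x s‖ ^ 2)
        (Set.Ico t₀ T) t ≤ 0) ∧
    AntitoneOn (fun s => g (x s) + ‖x' s‖ ^ 2 / 2 + ε s / 2 * ‖x s‖ ^ 2) (Set.Ico t₀ T) ∧
    ∃ M : ℝ, ∀ t ∈ Set.Ico t₀ T, ‖x' t‖ ≤ M := by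
  set S := Set.Ico t₀ T with hS
  set W : ℝ → ℝ := fun s => g (x s) + ‖x' s‖ ^ 2 / 2 + ε s / 2 * ‖x s‖ ^ 2 with hW
  set e' : ℝ → ℝ := fun t => derivWithin ε (Set.Ici t₀) t with he'
  -- positivity of β(t)
  have hβt : ∀ t ∈ S, 0 < γ + β / t ^ q := by
    intro t ht
    have htpos : (0:ℝ) < t := lt_of_lt_of_le ht₀ ht.1
    have htq : (0:ℝ) < t ^ q := Real.rpow_pos_of_pos htpos q
    rcases hγβ with hγ | ⟨hγ0, hβ⟩
    · rcases le_or_gt 0 β with hβ | hβ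
      · exact add_pos_of_pos_of_nonneg hγ (div_nonneg hβ htq.le)
      · -- β < 0 case
        have hc : (0:ℝ) < -β / γ := div_pos (neg_pos.mpr hβ) hγ
        have habs : |β / γ| = -β / γ := by
          rw [abs_of_neg (div_neg_of_neg_of_pos hβ hγ), neg_div]
        have ht1 : (-β / γ) ^ (1 / q) < t := lt_of_lt_of_le (habs ▸ hβneg hβ) ht.1
        have h2 : ((-β / γ) ^ (1 / q)) ^ q < t ^ q :=
          Real.rpow_lt_rpow (Real.rpow_nonneg hc.le _) ht1 hq.1
        have h3 : ((-β / γ) ^ (1 / q)) ^ q = -β / γ := by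
          rw [← Real.rpow_mul hc.le, one_div_mul_cancel (ne_of_gt hq.1), Real.rpow_one]
        have h4 : -β / γ < t ^ q := h3 ▸ h2
        have h5 : -β < γ * t ^ q := by
          rw [div_lt_iff₀ hγ] at h4; linarith [h4]
        have h6 : -β / t ^ q < γ := by
          rw [div_lt_iff₀ htq]; linarith
        have : -(β / t ^ q) < γ := by rw [neg_div] at h6; exact h6
        linarith
    · subst hγ0
      have : 0 < β / t ^ q := div_pos hβ htq
      linarith
  -- e' t ≤ 0 on Ici t₀
  have he'neg : ∀ t, t₀ ≤ t → e' t ≤ 0 := by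
    intro t ht
    have htI : t ∈ Set.Ici t₀ := ht
    have hder : HasDerivWithinAt ε (e' t) (Set.Ici t₀) t :=
      ((hε_C1.differentiableOn one_ne_zero) t htI).hasDerivWithinAt
    have htend : Tendsto (slope ε t) (𝓝[Set.Ici t₀ \ {t}] t) (𝓝 (e' t)) :=
      hasDerivWithinAt_iff_tendsto_slope.mp hder
    have hne : (𝓝[Set.Ici t₀ \ {t}] t).NeBot := by
      refine Filter.neBot_of_le (f := 𝓝[Set.Ioi t] t) (nhdsWithin_mono t ?_)
      intro s hs
      exact ⟨le_trans ht (le_of_lt hs), ne_of_gt hs⟩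
    refine le_of_tendsto htend ?_
    filter_upwards [self_mem_nhdsWithin] with s hs
    obtain ⟨hs1, hs2⟩ := hs
    rcases lt_or_gt_of_ne (Ne.symm hs2) with hlt | hgt
    · -- t < s
      have : ε s ≤ ε t := hε_anti htI hs1 hlt.le
      rw [slope_def_field]
      exact div_nonpos_of_nonpos_of_nonneg (by linarith) (by linarith)
    · -- s < t
      have : ε t ≤ ε s := hε_anti hs1 htI hgt.le
      rw [slope_def_field]
      exact div_nonpos_of_nonneg_of_nonpos (by linarith) (by linarith)
  -- the derivative of W within S
  have hWderiv : ∀ t ∈ S, HasDerivWithinAt W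
      (⟪gradient g (x t), x' t⟫ + (⟪x' t, x'' t⟫ + ⟪x'' t, x' t⟫) / 2 +
        (e' t / 2 * ‖x t‖ ^ 2 + ε t / 2 * (⟪x t, x' t⟫ + ⟪x' t, x t⟫))) S t := by
    intro t ht
    have hA : HasDerivAt (fun s => g (x s)) ⟪gradient g (x t), x' t⟫ t := by
      have := ((hg_diff (x t)).hasGradientAt.hasFDerivAt).comp_hasDerivAt t (hx1 t ht)
      simpa [Function.comp_def, InnerProductSpace.toDual_apply_apply] using this
    have hB : HasDerivAt (fun s => ‖x' s‖ ^ 2 / 2) ((⟪x' t, x'' t⟫ + ⟪x'' t, x' t⟫) / 2) t := by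
      have hi := HasDerivAt.inner ℝ (hx2 t ht) (hx2 t ht)
      simp only [real_inner_self_eq_norm_sq] at hi
      exact hi.div_const 2
    have hε' : HasDerivWithinAt (fun s => ε s / 2) (e' t / 2) S t :=
      ((((hε_C1.differentiableOn one_ne_zero) t ht.1).hasDerivWithinAt).mono
        Set.Ico_subset_Ici_self).div_const 2
    have hN : HasDerivAt (fun s => ‖x s‖ ^ 2) (⟪x t, x' t⟫ + ⟪x' t, x t⟫) t := by
      have hi := HasDerivAt.inner ℝ (hx1 t ht) (hx1 t ht)
      simp only [real_inner_self_eq_norm_sq] at hi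
      exact hi
    have hC := hε'.mul hN.hasDerivWithinAt
    exact (hA.hasDerivWithinAt.add hB.hasDerivWithinAt).add hC
  -- the derivative value is ≤ 0
  have hDneg : ∀ t ∈ S,
      ⟪gradient g (x t), x' t⟫ + (⟪x' t, x'' t⟫ + ⟪x'' t, x' t⟫) / 2 +
        (e' t / 2 * ‖x t‖ ^ 2 + ε t / 2 * (⟪x t, x' t⟫ + ⟪x' t, x t⟫)) ≤ 0 := by
    intro t ht
    set y := x t + (γ + β / t ^ q) • x' t with hy
    have htpos : (0:ℝ) < t := lt_of_lt_of_le ht₀ ht.1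
    have htq : (0:ℝ) < t ^ q := Real.rpow_pos_of_pos htpos q
    have hEq : x'' t = -((α / t ^ q) • x' t + (gradient g y + ε t • x t)) := by
      have h := hDS t ht
      simp only [add_assoc] at h
      exact eq_neg_of_add_eq_zero_left h
    have hxinner : ⟪x' t, x'' t⟫ =
        -(α / t ^ q * ⟪x' t, x' t⟫ + (⟪x' t, gradient g y⟫ + ε t * ⟪x' t, x t⟫)) := by
      rw [hEq, inner_neg_right, inner_add_right, inner_add_right,
        real_inner_smul_right, real_inner_smul_right]
    have hmono : 0 ≤ ⟪gradient g y - gradient g (x t), x' t⟫ := by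
      have h0 := grad_mono hg_conv hg_diff (x t) y
      have hyx : y - x t = (γ + β / t ^ q) • x' t := by rw [hy]; abel
      rw [hyx, real_inner_smul_right] at h0
      exact (mul_nonneg_iff_of_pos_left (hβt t ht)).mp h0
    rw [inner_sub_left] at hmono
    have hc1 : ⟪x'' t, x' t⟫ = ⟪x' t, x'' t⟫ := real_inner_comm _ _
    have hc2 : ⟪x t, x' t⟫ = ⟪x' t, x t⟫ := real_inner_comm _ _
    have hc3 : ⟪x' t, gradient g y⟫ = ⟪gradient g y, x' t⟫ := real_inner_comm _ _
    have hsq : ⟪x' t, x' t⟫ = ‖x' t‖ ^ 2 := real_inner_self_eq_norm_sq _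
    have h2 : 0 ≤ α / t ^ q * ‖x' t‖ ^ 2 :=
      mul_nonneg (div_nonneg hα.le htq.le) (sq_nonneg _)
    have h3 : e' t / 2 * ‖x t‖ ^ 2 ≤ 0 := by
      have := he'neg t ht.1
      nlinarith [sq_nonneg ‖x t‖]
    rw [hc1, hc2, hxinner, hc3, hsq]
    linarith [hmono]
  obtain ⟨z, hz⟩ := hg_min
  have hanti : AntitoneOn W S := by
    refine antitoneOn_of_deriv_nonpos (convex_Ico t₀ T) ?_ ?_ ?_
    · intro t ht
      exact ((hWderiv t ht).continuousWithinAt)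
    · intro t ht
      rw [interior_Ico] at ht
      have htS : t ∈ S := Set.Ioo_subset_Ico_self ht
      have : S ∈ 𝓝 t := Ico_mem_nhds ht.1 ht.2
      exact ((hWderiv t htS).hasDerivAt this).differentiableAt.differentiableWithinAt
    · intro t ht
      rw [interior_Ico] at ht
      have htS : t ∈ S := Set.Ioo_subset_Ico_self ht
      have hnhds : S ∈ 𝓝 t := Ico_mem_nhds ht.1 ht.2
      rw [((hWderiv t htS).hasDerivAt hnhds).deriv]
      exact hDneg t htS
  refine ⟨?_, hanti, ?_⟩
  · intro t ht
    rw [(hWderiv t ht).derivWithin ((uniqueDiffOn_Ico t₀ T) t ht)]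
    exact hDneg t ht
  · refine ⟨Real.sqrt (2 * (W t₀ - g z)), fun t ht => ?_⟩
    have ht0S : t₀ ∈ S := ⟨le_refl _, lt_of_le_of_lt ht.1 ht.2⟩
    have hWle : W t ≤ W t₀ := hanti ht0S ht ht.1
    have hgz : g z ≤ g (x t) := hz (x t)
    have hεpos : 0 ≤ ε t / 2 * ‖x t‖ ^ 2 :=
      mul_nonneg (div_nonneg (hε_nonneg t ht.1) two_pos.le) (sq_nonneg _)
    have hWt : g (x t) + ‖x' t‖ ^ 2 / 2 + ε t / 2 * ‖x t‖ ^ 2 = W t := rfl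
    have h' : g (x t) + ‖x' t‖ ^ 2 / 2 + ε t / 2 * ‖x t‖ ^ 2 ≤ W t₀ := hWle
    clear_value W
    have hsq : ‖x' t‖ ^ 2 ≤ 2 * (W t₀ - g z) := by linarith
    calc ‖x' t‖ = Real.sqrt (‖x' t‖ ^ 2) := (Real.sqrt_sq (norm_nonneg _)).symm
      _ ≤ Real.sqrt (2 * (W t₀ - g z)) := Real.sqrt_le_sqrt hsq
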